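/- Let K be a field of characteristic 0, let g, ω ∈ J(K) and n ≥ 1. If ω is the root of order n of g (that is, ω^[n] = g), then the multiplicity of ω equals the multiplicity of g; equivalently, the order of the power series ω − x equals the order of the power series g − x (with the convention that the zero power series has order ∞). -/

import Mathlib

open PowerSeries Finset

/-- Composition `f ∘ g` of formal power series (substitution of `g` into `f`).
This coefficientwise formula agrees with the usual substitution whenever the
constant coefficient of `g` is zero, since then `g ^ j` has order at least `j`. -/
noncomputable def psComp {Z : Type*} [CommRing Z] (f g : Z⟦X⟧) : Z⟦X⟧ :=
  PowerSeries.mk fun n => ∑ j ∈ Finset.range (n + 1), coeff (R := Z) j f * coeff (R := Z) n (g ^ j)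

/-- The `m`-th compositional iterate: `ω^[0] = X` and `ω^[m+1] = ω ∘ ω^[m]`. -/
noncomputable def psIter {Z : Type*} [CommRing Z] (ω : Z⟦X⟧) : ℕ → Z⟦X⟧
  | 0 => PowerSeries.X
  | m + 1 => psComp ω (psIter ω m)

/-!
Write `ω = X + a X^k + O(X^(k+1))` with `k ≥ 2`. Modulo `X^(k+1)`, composing two series of
this shape adds their `k`-th coefficients, because `h^k ≡ X^k` whenever `h ≡ X` modulo `X^2`.
Hence `ω^[n] ≡ X + n a X^k`, and in characteristic zero `n a = 0` only when `a = 0`. By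
induction on `k`, `X^k` divides `ω - X` exactly when it divides `ω^[n] - X`, so both have the
same order.
-/

theorem pow_succ_dvd_pow_sub_pow_of_sq_dvd_sub {R : Type*} [CommRing R] {x y : R}
    (h : x ^ 2 ∣ y - x) (k : ℕ) : x ^ (k + 1) ∣ y ^ k - x ^ k := by
  obtain ⟨s, hs⟩ := h
  have hy : y = x * (1 + x * s) := by linear_combination hs
  have hx : x ∣ (1 + x * s) ^ k - 1 :=
    (dvd_mul_right x s).trans (by simpa using sub_dvd_pow_sub_pow (1 + x * s) 1 k)
  rw [hy, mul_pow, ← mul_sub_one, pow_succ]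
  exact mul_dvd_mul_left _ hx

namespace PowerSeries

variable {R : Type*} [CommRing R]

theorem X_sq_dvd_sub_X {f : R⟦X⟧} (h0 : constantCoeff f = 0) (h1 : coeff 1 f = 1) :
    (X : R⟦X⟧) ^ 2 ∣ f - X := by
  rw [X_pow_dvd_iff]
  intro m hm
  interval_cases m <;> simp [h0, h1, coeff_X]

theorem X_pow_succ_dvd_sub_C_coeff_mul_X_pow {k : ℕ} {f : R⟦X⟧}
    (h : (X : R⟦X⟧) ^ k ∣ f) :
    (X : R⟦X⟧) ^ (k + 1) ∣ f - C (coeff k f) * X ^ k := by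
  obtain ⟨q, rfl⟩ := h
  have hq : X ∣ q - C (constantCoeff q) := by simp [X_dvd_iff]
  rw [pow_succ,
    show coeff k (X ^ k * q) = constantCoeff q by simpa using coeff_X_pow_mul q k 0,
    show X ^ k * q - C (constantCoeff q) * X ^ k = X ^ k * (q - C (constantCoeff q)) by ring]
  exact mul_dvd_mul_left _ hq

theorem X_pow_succ_dvd_C_mul_X_pow_iff {k : ℕ} {a : R} :
    (X : R⟦X⟧) ^ (k + 1) ∣ C a * X ^ k ↔ a = 0 := by
  refine ⟨fun h => ?_, fun h => by simp [h]⟩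
  simpa [coeff_C_mul_X_pow] using X_pow_dvd_iff.mp h k (Nat.lt_succ_self k)

theorem coeff_psComp (f h : R⟦X⟧) (m : ℕ) :
    coeff m (psComp f h) = ∑ j ∈ range (m + 1), coeff j f * coeff m (h ^ j) :=
  coeff_mk _ _

theorem psComp_add (f₁ f₂ h : R⟦X⟧) :
    psComp (f₁ + f₂) h = psComp f₁ h + psComp f₂ h := by
  ext m
  simp [coeff_psComp, add_mul, sum_add_distrib]

theorem psComp_C_mul (a : R) (f h : R⟦X⟧) : psComp (C a * f) h = C a * psComp f h := by
  ext m
  simp [coeff_psComp, mul_sum, mul_assoc]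

theorem psComp_X_pow {h : R⟦X⟧} (hh : constantCoeff h = 0) (k : ℕ) :
    psComp (X ^ k) h = h ^ k := by
  ext m
  rw [coeff_psComp]
  simp only [coeff_X_pow, ite_mul, one_mul, zero_mul, sum_ite_eq', mem_range]
  split_ifs with hkm
  · rfl
  · have hX : (X : R⟦X⟧) ^ k ∣ h ^ k := pow_dvd_pow_of_dvd (X_dvd_iff.mpr hh) k
    exact (X_pow_dvd_iff.mp hX m (by omega)).symm

theorem psComp_X {h : R⟦X⟧} (hh : constantCoeff h = 0) : psComp X h = h := by
  simpa using psComp_X_pow hh 1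

theorem X_pow_dvd_psComp_X_pow_mul (k : ℕ) (r h : R⟦X⟧) :
    (X : R⟦X⟧) ^ k ∣ psComp (X ^ k * r) h := by
  rw [X_pow_dvd_iff]
  intro m hm
  rw [coeff_psComp]
  refine sum_eq_zero fun j hj => ?_
  rw [coeff_X_pow_mul', if_neg (by simp only [mem_range] at hj; omega), zero_mul]

theorem X_pow_succ_dvd_psComp_sub {k : ℕ} (hk : 2 ≤ k) {f h : R⟦X⟧} {a b : R}
    (hf : X ^ (k + 1) ∣ f - X - C a * X ^ k) (hh : X ^ (k + 1) ∣ h - X - C b * X ^ k) :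
    X ^ (k + 1) ∣ psComp f h - X - C (a + b) * X ^ k := by
  obtain ⟨r, hr⟩ := hf
  have hf' : f = X + C a * X ^ k + X ^ (k + 1) * r := by linear_combination hr
  have hX : (X : R⟦X⟧) ^ 2 ∣ h - X := by
    have h2k : (X : R⟦X⟧) ^ 2 ∣ X ^ k := pow_dvd_pow X hk
    simpa using dvd_add ((h2k.trans (pow_dvd_pow X k.le_succ)).trans hh) (h2k.mul_left (C b))
  have hh0 : constantCoeff h = 0 := by
    simpa [X_dvd_iff] using dvd_add ((dvd_pow_self X two_ne_zero).trans hX) (dvd_refl X)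
  rw [hf', psComp_add, psComp_add, psComp_C_mul, psComp_X hh0, psComp_X_pow hh0,
    show h + C a * h ^ k + psComp (X ^ (k + 1) * r) h - X - C (a + b) * X ^ k =
      (h - X - C b * X ^ k) + C a * (h ^ k - X ^ k) + psComp (X ^ (k + 1) * r) h by
        rw [map_add]; ring]
  exact dvd_add (dvd_add hh ((pow_succ_dvd_pow_sub_pow_of_sq_dvd_sub hX k).mul_left _))
    (X_pow_dvd_psComp_X_pow_mul _ r h)

theorem psIter_succ (ω : R⟦X⟧) (n : ℕ) : psIter ω (n + 1) = psComp ω (psIter ω n) := rfl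

theorem X_pow_succ_dvd_psIter_sub {k : ℕ} (hk : 2 ≤ k) {ω : R⟦X⟧} {a : R}
    (hω : X ^ (k + 1) ∣ ω - X - C a * X ^ k) (n : ℕ) :
    X ^ (k + 1) ∣ psIter ω n - X - C (n * a) * X ^ k := by
  induction n with
  | zero => simp [psIter]
  | succ n ih =>
    rw [psIter_succ, show ((n + 1 : ℕ) : R) * a = a + n * a by push_cast; ring]
    exact X_pow_succ_dvd_psComp_sub hk hω ih

theorem X_pow_dvd_psIter_sub_X_iff [NoZeroDivisors R] {ω : R⟦X⟧} (hω : X ^ 2 ∣ ω - X)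
    {n : ℕ} (hn : (n : R) ≠ 0) (k : ℕ) : X ^ k ∣ psIter ω n - X ↔ X ^ k ∣ ω - X := by
  have hsucc {k : ℕ} (hk : 2 ≤ k) (hωk : X ^ k ∣ ω - X) :
      X ^ (k + 1) ∣ psIter ω n - X - C ((n : R) * coeff k (ω - X)) * X ^ k :=
    X_pow_succ_dvd_psIter_sub hk (X_pow_succ_dvd_sub_C_coeff_mul_X_pow hωk) n
  have hlow : (X : R⟦X⟧) ^ 2 ∣ psIter ω n - X :=
    (dvd_iff_dvd_of_dvd_sub ((pow_dvd_pow X (Nat.le_succ 2)).trans (hsucc le_rfl hω))).mpr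
      (dvd_mul_left _ _)
  rcases lt_or_ge k 2 with hk | hk
  · exact iff_of_true ((pow_dvd_pow X hk.le).trans hlow) ((pow_dvd_pow X hk.le).trans hω)
  induction k, hk using Nat.le_induction with
  | base => exact iff_of_true hlow hω
  | succ k hk ih =>
    have hle : (X : R⟦X⟧) ^ k ∣ X ^ (k + 1) := pow_dvd_pow X k.le_succ
    by_cases hωk : X ^ k ∣ ω - X
    · rw [dvd_iff_dvd_of_dvd_sub (hsucc hk hωk),
        dvd_iff_dvd_of_dvd_sub (X_pow_succ_dvd_sub_C_coeff_mul_X_pow hωk),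
        X_pow_succ_dvd_C_mul_X_pow_iff, X_pow_succ_dvd_C_mul_X_pow_iff, mul_eq_zero,
        or_iff_right hn]
    · exact iff_of_false (fun h => hωk (ih.mp (hle.trans h))) (fun h => hωk (hle.trans h))

end PowerSeries

theorem multiplicity_root_eq_char_zero_general {K : Type*} [Field K] [CharZero K] (g ω : K⟦X⟧)
    (hω0 : constantCoeff (R := K) ω = 0) (hω1 : coeff (R := K) 1 ω = 1)
    (n : ℕ) (hn : 1 ≤ n) (hroot : psIter ω n = g) :
    (ω - PowerSeries.X).order = (g - PowerSeries.X).order := by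
  rw [order_eq_emultiplicity_X, order_eq_emultiplicity_X, emultiplicity_eq_emultiplicity_iff,
    ← hroot]
  exact fun k => (X_pow_dvd_psIter_sub_X_iff (X_sq_dvd_sub_X hω0 hω1)
    (Nat.cast_ne_zero.mpr (by omega)) k).symm

/-- over a field of characteristic 0, if `ω^[n] = g` in `𝒥(K)` then the
multiplicity of `ω` equals that of `g`, i.e. `order (ω − X) = order (g − X)`. -/
theorem multiplicity_root_eq_char_zero {K : Type*} [Field K] [CharZero K] (g ω : K⟦X⟧)
    (hg0 : constantCoeff (R := K) g = 0) (hg1 : coeff (R := K) 1 g = 1)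
    (hω0 : constantCoeff (R := K) ω = 0) (hω1 : coeff (R := K) 1 ω = 1)
    (n : ℕ) (hn : 1 ≤ n) (hroot : psIter ω n = g) :
    (ω - PowerSeries.X).order = (g - PowerSeries.X).order :=
  multiplicity_root_eq_char_zero_general g ω hω0 hω1 n hn hroot
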